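/- Let E be a field of characteristic different from 2, let v be a henselian ℤ-valuation on E with v(2) = 0 and separably closed residue field κ_v, and let π ∈ E^× with v(π) = 1. Then for every positive integer r, the quadratic form φ_r = ⟨X^r − π, X^{r+1} + π, πX, X(X^r + π)⟩ is anisotropic over the rational function field E(X). -/

import Mathlib

/-!
Conventions used throughout this file.

* `ℤ`-valuations.  We use valuations with values in the multiplicative value group
  `Zm0 := WithZero (Multiplicative ℤ)` (Mathlib's `ℤₘ₀`).  The *additive* value `n : ℤ`
  of the paper corresponds to the multiplicative value `ofAdd (-n)`, so additive value `0`
  corresponds to `(1 : Zm0)`, the valuation ring of `v` is `{x | v x ≤ 1}`, and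
  additive inequalities get reversed.  A `ℤ`-valuation (a valuation with value group `ℤ`)
  is a `v : Valuation K Zm0` that is surjective.

* The valuation ring of `v` is `v.valuationSubring`, and the residue field `κ_v` is
  `IsLocalRing.ResidueField v.valuationSubring`.
-/

open Multiplicative

local notation "Zm0" => WithZero (Multiplicative ℤ)

universe u

/-- A valuation `val` on a field `E` is *henselian* if it extends uniquely to every finite
field extension `L` of `E`.  Extensions of `val` to `L` (up to equivalence) correspond
exactly to valuation subrings of `L` whose pullback to `E` is the valuation subring of
`val`, so uniqueness of the extension is expressed by `∃!` below. -/
def IsHenselianValuation {E : Type u} [Field E] {Γ : Type*}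
    [LinearOrderedCommGroupWithZero Γ] (val : Valuation E Γ) : Prop :=
  ∀ (L : Type u) [Field L] [Algebra E L] [FiniteDimensional E L],
    ∃! O : ValuationSubring L, O.comap (algebraMap E L) = val.valuationSubring

/-- The diagonal quadratic form `⟨a 0, …, a (n-1)⟩` (i.e. `a 0 • Y₀² + ⋯ + a (n-1) • Yₙ₋₁²`)
is anisotropic over `K`: it has no nontrivial zero. -/
def AnisotropicDiag {K : Type*} [Field K] {n : ℕ} (a : Fin n → K) : Prop :=
  ∀ y : Fin n → K, ∑ i, a i * y i ^ 2 = 0 → y = 0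

namespace Statement5Aux

open Polynomial

abbrev Λ : Type := WithZero (Multiplicative (ℤ ×ₗ ℤ))

noncomputable def val (a b : ℤ) : Λ :=
  ((ofAdd (toLex (a, b)) : Multiplicative (ℤ ×ₗ ℤ)) : Λ)

lemma val_ne_zero (a b : ℤ) : val a b ≠ 0 := WithZero.coe_ne_zero

lemma toLex_add' (a b c d : ℤ) :
    (toLex (a, b) + toLex (c, d) : ℤ ×ₗ ℤ) = toLex (a + c, b + d) := rfl

lemma val_mul (a b c d : ℤ) : val a b * val c d = val (a + c) (b + d) := by
  rw [val, val, val, ← WithZero.coe_mul, ← ofAdd_add, toLex_add']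

lemma val_zero : val 0 0 = 1 := rfl

lemma val_le_val {a b c d : ℤ} : val a b ≤ val c d ↔ (a < c ∨ (a = c ∧ b ≤ d)) := by
  rw [val, val, WithZero.coe_le_coe, Multiplicative.ofAdd_le, Prod.Lex.le_iff]
  exact Iff.rfl

lemma mul_val_le_mul_val_iff {x y : Λ} (a b : ℤ) :
    x * val a b ≤ y * val a b ↔ x ≤ y := by
  constructor
  · intro h
    have := mul_le_mul_left h (val (-a) (-b))
    simpa [mul_assoc, val_mul, val_zero] using this
  · intro h; exact mul_le_mul_left h _

lemma mul_val_lt_mul_val_iff {x y : Λ} (a b : ℤ) :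
    x * val a b < y * val a b ↔ x < y := by
  simp only [lt_iff_not_ge, mul_val_le_mul_val_iff]

variable {E : Type*} [Field E] (u : Valuation E Λ)

/-- The Gauss valuation of a polynomial. -/
noncomputable def gw (f : E[X]) : Λ :=
  f.support.sup fun i => u (f.coeff i) * val (-(i : ℤ)) 0

lemma bot_eq : (⊥ : Λ) = 0 := rfl

lemma gw_zero : gw u 0 = 0 := by
  rw [gw, Polynomial.support_zero]; rfl

lemma term_le (f : E[X]) (i : ℕ) : u (f.coeff i) * val (-(i : ℤ)) 0 ≤ gw u f := by
  unfold gw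
  by_cases h : i ∈ f.support
  · exact Finset.le_sup (f := fun j => u (f.coeff j) * val (-(j : ℤ)) 0) h
  · rw [Polynomial.notMem_support_iff.mp h]
    simp [zero_le']

lemma gw_ne_zero {f : E[X]} (hf : f ≠ 0) : gw u f ≠ 0 := by
  obtain ⟨i, hi⟩ := Polynomial.support_nonempty.mpr hf
  have h1 : u (f.coeff i) * val (-(i : ℤ)) 0 ≠ 0 :=
    mul_ne_zero (u.ne_zero_iff.mpr (Polynomial.mem_support_iff.mp hi)) (val_ne_zero _ _)
  intro h0
  exact h1 (le_antisymm (h0 ▸ term_le u f i) zero_le')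

lemma gw_le_of {f : E[X]} {M : Λ} (h : ∀ i, u (f.coeff i) * val (-(i : ℤ)) 0 ≤ M) :
    gw u f ≤ M := Finset.sup_le fun i _ => h i

lemma gw_eq_of {f : E[X]} {M : Λ} (i₀ : ℕ)
    (h₀ : u (f.coeff i₀) * val (-(i₀ : ℤ)) 0 = M)
    (h : ∀ i, u (f.coeff i) * val (-(i : ℤ)) 0 ≤ M) : gw u f = M :=
  le_antisymm (gw_le_of u h) (h₀ ▸ term_le u f i₀)

lemma exists_min_index {f : E[X]} (hf : f ≠ 0) :
    ∃ i₀ ∈ f.support, u (f.coeff i₀) * val (-(i₀ : ℤ)) 0 = gw u f ∧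
      ∀ a < i₀, u (f.coeff a) * val (-(a : ℤ)) 0 < gw u f := by
  obtain ⟨j, hj, hje⟩ := Finset.exists_mem_eq_sup f.support
    (Polynomial.support_nonempty.mpr hf) (fun i => u (f.coeff i) * val (-(i : ℤ)) 0)
  set A : Finset ℕ := f.support.filter
    (fun i => u (f.coeff i) * val (-(i : ℤ)) 0 = gw u f) with hA
  have hAne : A.Nonempty := ⟨j, Finset.mem_filter.mpr ⟨hj, hje.symm⟩⟩
  refine ⟨A.min' hAne, (Finset.mem_filter.mp (A.min'_mem hAne)).1,
    (Finset.mem_filter.mp (A.min'_mem hAne)).2, fun a ha => ?_⟩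
  have haA : a ∉ A := fun h => absurd (A.min'_le a h) (not_le.mpr ha)
  by_cases hs : a ∈ f.support
  · have hne : u (f.coeff a) * val (-(a : ℤ)) 0 ≠ gw u f := fun h =>
      haA (Finset.mem_filter.mpr ⟨hs, h⟩)
    exact lt_of_le_of_ne (term_le u f a) hne
  · rw [Polynomial.notMem_support_iff.mp hs]
    simpa [zero_lt_iff] using gw_ne_zero u hf

lemma coeff_le (f : E[X]) (i : ℕ) : u (f.coeff i) ≤ gw u f * val (i : ℤ) 0 := by
  have h := mul_le_mul_left (term_le u f i) (val (i : ℤ) 0)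
  simpa [mul_assoc, val_mul, val_zero] using h

lemma val_neg_add (a b : ℕ) :
    val (-(a : ℤ)) 0 * val (-(b : ℤ)) 0 = val (-((a : ℤ) + (b : ℤ))) 0 := by
  rw [val_mul, ← neg_add, add_zero]

lemma gw_mul (f g : E[X]) : gw u (f * g) = gw u f * gw u g := by
  rcases eq_or_ne f 0 with rfl | hf; · simp [gw_zero]
  rcases eq_or_ne g 0 with rfl | hg; · simp [gw_zero]
  obtain ⟨i₀, hi₀s, hi₀, hi₀min⟩ := exists_min_index u hf
  obtain ⟨j₀, hj₀s, hj₀, hj₀min⟩ := exists_min_index u hg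
  have hrw : ∀ (p q : E[X]) (a b : ℕ),
      (u (p.coeff a) * u (q.coeff b)) * val (-((a : ℤ) + (b : ℤ))) 0 =
      (u (p.coeff a) * val (-(a : ℤ)) 0) * (u (q.coeff b) * val (-(b : ℤ)) 0) := by
    intro p q a b
    rw [mul_mul_mul_comm, val_neg_add]
  refine le_antisymm (gw_le_of u fun n => ?_) ?_
  · have h1 : u ((f * g).coeff n) ≤ gw u f * gw u g * val (n : ℤ) 0 := by
      rw [Polynomial.coeff_mul]
      apply Valuation.map_sum_le
      intro x hx
      have hsum : x.1 + x.2 = n := Finset.HasAntidiagonal.mem_antidiagonal.mp hx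
      have hc : (x.1 : ℤ) + (x.2 : ℤ) = (n : ℤ) := by omega
      calc u (f.coeff x.1 * g.coeff x.2) = u (f.coeff x.1) * u (g.coeff x.2) := map_mul _ _ _
        _ ≤ (gw u f * val (x.1 : ℤ) 0) * (gw u g * val (x.2 : ℤ) 0) :=
            mul_le_mul' (coeff_le u f x.1) (coeff_le u g x.2)
        _ = gw u f * gw u g * val (n : ℤ) 0 := by
            rw [mul_mul_mul_comm, val_mul, add_zero, hc]
    have h2 := mul_le_mul_left h1 (val (-(n : ℤ)) 0)
    simpa [mul_assoc, val_mul, val_zero] using h2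
  · have hfc : f.coeff i₀ ≠ 0 := Polynomial.mem_support_iff.mp hi₀s
    have hgc : g.coeff j₀ ≠ 0 := Polynomial.mem_support_iff.mp hj₀s
    have hne : u (f.coeff i₀ * g.coeff j₀) ≠ 0 :=
      u.ne_zero_iff.mpr (mul_ne_zero hfc hgc)
    have key : u ((f * g).coeff (i₀ + j₀)) = u (f.coeff i₀) * u (g.coeff j₀) := by
      rw [Polynomial.coeff_mul]
      have hmem : ((i₀, j₀) : ℕ × ℕ) ∈ Finset.HasAntidiagonal.antidiagonal (i₀ + j₀) :=
        Finset.HasAntidiagonal.mem_antidiagonal.mpr rfl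
      rw [← Finset.add_sum_erase _ _ hmem]
      rw [Valuation.map_add_eq_of_lt_left, map_mul]
      apply Valuation.map_sum_lt _ hne
      intro x hx
      obtain ⟨hxne, hxmem⟩ := Finset.mem_erase.mp hx
      have hsum : x.1 + x.2 = i₀ + j₀ := Finset.HasAntidiagonal.mem_antidiagonal.mp hxmem
      have hcast : (x.1 : ℤ) + (x.2 : ℤ) = (i₀ : ℤ) + (j₀ : ℤ) := by omega
      rw [map_mul, map_mul]
      have main : u (f.coeff x.1) * u (g.coeff x.2) * val (-((i₀ : ℤ) + (j₀ : ℤ))) 0 <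
          u (f.coeff i₀) * u (g.coeff j₀) * val (-((i₀ : ℤ) + (j₀ : ℤ))) 0 := by
        rw [hrw f g i₀ j₀, hi₀, hj₀, ← hcast, hrw f g x.1 x.2]
        rcases lt_trichotomy x.1 i₀ with hlt | heq | hgt
        · have h3 := mul_lt_mul_of_le_of_lt_of_nonneg_of_pos (term_le u g x.2)
            (hi₀min _ hlt) zero_le' (zero_lt_iff.mpr (gw_ne_zero u hg))
          calc (u (f.coeff x.1) * val (-(x.1 : ℤ)) 0) * (u (g.coeff x.2) * val (-(x.2 : ℤ)) 0)
              = (u (g.coeff x.2) * val (-(x.2 : ℤ)) 0) * (u (f.coeff x.1) * val (-(x.1 : ℤ)) 0) :=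
                mul_comm _ _
            _ < gw u g * gw u f := h3
            _ = gw u f * gw u g := mul_comm _ _
        · exact absurd (Prod.ext_iff.mpr ⟨heq, by omega⟩) hxne
        · have hlt2 : x.2 < j₀ := by omega
          exact mul_lt_mul_of_le_of_lt_of_nonneg_of_pos (term_le u f x.1) (hj₀min _ hlt2) zero_le' (zero_lt_iff.mpr (gw_ne_zero u hf))
      exact (mul_val_lt_mul_val_iff _ _).mp main
    have heq2 : gw u f * gw u g = u ((f * g).coeff (i₀ + j₀)) * val (-((i₀ + j₀ : ℕ) : ℤ)) 0 := by
      rw [key, ← hi₀, ← hj₀, ← hrw f g i₀ j₀]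
      push_cast
      ring_nf
    rw [heq2]
    exact term_le u (f * g) (i₀ + j₀)

lemma gw_neg (f : E[X]) : gw u (-f) = gw u f := by
  unfold gw
  rw [Polynomial.support_neg]
  apply Finset.sup_congr rfl
  intro i _
  rw [Polynomial.coeff_neg, Valuation.map_neg]

lemma gw_add_le (f g : E[X]) : gw u (f + g) ≤ max (gw u f) (gw u g) := by
  apply gw_le_of
  intro i
  rw [Polynomial.coeff_add]
  have h := u.map_add (f.coeff i) (g.coeff i)
  rcases le_total (u (f.coeff i)) (u (g.coeff i)) with hle | hle
  · rw [max_eq_right hle] at h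
    exact le_trans (mul_le_mul_left h _) (le_trans (term_le u g i) (le_max_right _ _))
  · rw [max_eq_left hle] at h
    exact le_trans (mul_le_mul_left h _) (le_trans (term_le u f i) (le_max_left _ _))

lemma gw_add_eq {f g : E[X]} (h : gw u g < gw u f) : gw u (f + g) = gw u f := by
  refine le_antisymm (le_trans (gw_add_le u f g) (max_le le_rfl h.le)) ?_
  by_contra h'
  rw [not_le] at h'
  have h1 : f = (f + g) + (-g) := by ring
  have h2 : gw u f ≤ max (gw u (f + g)) (gw u (-g)) := by
    conv_lhs => rw [h1]
    exact gw_add_le u (f + g) (-g)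
  rw [gw_neg] at h2
  rcases max_cases (gw u (f + g)) (gw u g) with ⟨he, _⟩ | ⟨he, _⟩ <;> rw [he] at h2
  · exact absurd (lt_of_le_of_lt h2 h') (lt_irrefl _)
  · exact absurd (lt_of_le_of_lt h2 h) (lt_irrefl _)

lemma gw_sum_le {ι : Type*} (s : Finset ι) (t : ι → E[X]) :
    gw u (∑ j ∈ s, t j) ≤ s.sup fun j => gw u (t j) := by
  induction s using Finset.cons_induction with
  | empty => simp [gw_zero, bot_eq]
  | cons a s ha ih =>
    rw [Finset.sum_cons, Finset.sup_cons]
    refine le_trans (gw_add_le u _ _) ?_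
    show max _ _ ≤ max _ _
    exact max_le_max le_rfl ih

section Embed

/-- The additive hom `ℤ →+ ℤ ×ₗ ℤ`, `n ↦ (r n, n)`. -/
def φa (r : ℕ) : ℤ →+ (ℤ ×ₗ ℤ) where
  toFun n := toLex ((r : ℤ) * n, n)
  map_zero' := by show toLex ((r : ℤ) * 0, (0:ℤ)) = 0; rw [mul_zero]; rfl
  map_add' a b := by show toLex ((r : ℤ) * (a + b), a + b) = toLex (_, _) + toLex (_, _); rw [mul_add]; rfl

def ψ (r : ℕ) : Multiplicative ℤ →* Multiplicative (ℤ ×ₗ ℤ) :=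
  AddMonoidHom.toMultiplicative (φa r)

noncomputable def ιΛ (r : ℕ) : Zm0 →*₀ Λ := WithZero.map' (ψ r)

lemma ιΛ_mono (r : ℕ) : Monotone (ιΛ r) := by
  intro x y h
  rcases eq_or_ne x 0 with rfl | hx
  · rw [map_zero]; exact zero_le'
  have hy : y ≠ 0 := fun h0 => hx (le_antisymm (h0 ▸ h) zero_le')
  obtain ⟨a, rfl⟩ := WithZero.ne_zero_iff_exists.mp hx
  obtain ⟨b, rfl⟩ := WithZero.ne_zero_iff_exists.mp hy
  rw [WithZero.coe_le_coe] at h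
  rw [ιΛ, WithZero.map'_coe, WithZero.map'_coe, WithZero.coe_le_coe]
  show φa r (toAdd a) ≤ φa r (toAdd b)
  have hab : toAdd a ≤ toAdd b := h
  rcases eq_or_lt_of_le hab with he | hlt
  · rw [he]
  · apply le_of_lt
    rw [φa]
    simp only [AddMonoidHom.coe_mk, ZeroHom.coe_mk]
    rw [Prod.Lex.lt_iff]
    rcases eq_or_lt_of_le (mul_le_mul_of_nonneg_left hlt.le (by positivity : (0:ℤ) ≤ (r:ℤ))) with he2 | hlt2
    · exact Or.inr ⟨he2, hlt⟩
    · exact Or.inl hlt2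

variable {E : Type*} [Field E]

noncomputable def uval (v : Valuation E Zm0) (r : ℕ) : Valuation E Λ :=
  v.map (ιΛ r) (ιΛ_mono r)

lemma uval_pi (v : Valuation E Zm0) (r : ℕ) {π : E}
    (hπ : v π = ((Multiplicative.ofAdd (-1 : ℤ) : Multiplicative ℤ) : Zm0)) :
    uval v r π = val (-(r : ℤ)) (-1) := by
  show ιΛ r (v π) = val (-(r : ℤ)) (-1)
  rw [hπ, ιΛ, WithZero.map'_coe]
  rw [val]
  congr 1
  show Multiplicative.ofAdd (φa r (-1)) = _
  rw [φa]
  simp only [AddMonoidHom.coe_mk, ZeroHom.coe_mk]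
  norm_num

lemma uval_one (v : Valuation E Zm0) (r : ℕ) : uval v r 1 = val 0 0 := by
  rw [val_zero]; exact map_one _

end Embed

section Parity

def π1 (z : ℤ ×ₗ ℤ) : ℤ := (ofLex z).1
def π2 (z : ℤ ×ₗ ℤ) : ℤ := (ofLex z).2

lemma π1_add (x y : ℤ ×ₗ ℤ) : π1 (x + y) = π1 x + π1 y := rfl
lemma π2_add (x y : ℤ ×ₗ ℤ) : π2 (x + y) = π2 x + π2 y := rfl
lemma π1_toLex (a b : ℤ) : π1 (toLex (a, b)) = a := rfl
lemma π2_toLex (a b : ℤ) : π2 (toLex (a, b)) = b := rfl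

lemma sq_class_eq {a b c d : ℤ} {x y : Λ} (hx : x ≠ 0) (hy : y ≠ 0)
    (h : val a b * x ^ 2 = val c d * y ^ 2) :
    ∃ k l k' l' : ℤ, a + 2 * k = c + 2 * l ∧ b + 2 * k' = d + 2 * l' := by
  obtain ⟨m, rfl⟩ := WithZero.ne_zero_iff_exists.mp hx
  obtain ⟨m', rfl⟩ := WithZero.ne_zero_iff_exists.mp hy
  rw [val, val, ← WithZero.coe_pow, ← WithZero.coe_pow, ← WithZero.coe_mul, ← WithZero.coe_mul,
    WithZero.coe_inj] at h
  have h2 := congrArg Multiplicative.toAdd h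
  rw [toAdd_mul, toAdd_mul, toAdd_pow, toAdd_pow, toAdd_ofAdd, toAdd_ofAdd,
    two_nsmul, two_nsmul] at h2
  refine ⟨π1 (toAdd m), π1 (toAdd m'), π2 (toAdd m), π2 (toAdd m'), ?_, ?_⟩
  · have e1 := congrArg π1 h2
    rw [π1_add, π1_add, π1_add, π1_add, π1_toLex, π1_toLex] at e1
    omega
  · have e2 := congrArg π2 h2
    rw [π2_add, π2_add, π2_add, π2_add, π2_toLex, π2_toLex] at e2
    omega

end Parity

section Main

variable {E : Type*} [Field E] (v : Valuation E Zm0) {π : E}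
  (hπ : v π = ((Multiplicative.ofAdd (-1 : ℤ) : Multiplicative ℤ) : Zm0)) (r : ℕ) (hr : 0 < r)

lemma val_congr {a b c d : ℤ} (h1 : a = c) (h2 : b = d) : val a b = val c d := by
  rw [h1, h2]

include hπ hr

lemma G0 : gw (uval v r) (X ^ r - C π : E[X]) = val (-(r : ℤ)) 0 := by
  apply gw_eq_of (uval v r) r
  · rw [Polynomial.coeff_sub, Polynomial.coeff_X_pow, Polynomial.coeff_C,
      if_pos rfl, if_neg hr.ne', sub_zero, map_one, one_mul]
  · intro i
    rw [Polynomial.coeff_sub, Polynomial.coeff_X_pow, Polynomial.coeff_C]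
    rcases eq_or_ne i r with rfl | hir
    · rw [if_pos rfl, if_neg hr.ne', sub_zero, map_one, one_mul]
    · rw [if_neg hir]
      rcases eq_or_ne i 0 with rfl | hi0
      · rw [if_pos rfl, zero_sub, Valuation.map_neg, uval_pi v r hπ, Nat.cast_zero, neg_zero,
          val_mul, add_zero, add_zero, val_le_val]
        exact Or.inr ⟨rfl, by norm_num⟩
      · rw [if_neg hi0, sub_zero, map_zero, zero_mul]
        exact zero_le'

lemma G1 : gw (uval v r) (X ^ (r + 1) + C π : E[X]) = val (-(r : ℤ)) (-1) := by
  apply gw_eq_of (uval v r) 0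
  · rw [Polynomial.coeff_add, Polynomial.coeff_X_pow, Polynomial.coeff_C,
      if_neg (by omega), if_pos rfl, zero_add, uval_pi v r hπ, Nat.cast_zero, neg_zero,
      val_mul, add_zero, add_zero]
  · intro i
    rw [Polynomial.coeff_add, Polynomial.coeff_X_pow, Polynomial.coeff_C]
    rcases eq_or_ne i (r + 1) with rfl | hir
    · rw [if_pos rfl, if_neg (by omega), add_zero, map_one, one_mul, val_le_val]
      left; push_cast; omega
    · rw [if_neg hir]
      rcases eq_or_ne i 0 with rfl | hi0
      · rw [if_pos rfl, zero_add, uval_pi v r hπ, Nat.cast_zero, neg_zero, val_mul,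
          add_zero, add_zero]
      · rw [if_neg hi0, add_zero, map_zero, zero_mul]
        exact zero_le'

lemma G2 : gw (uval v r) (C π * X : E[X]) = val (-((r : ℤ) + 1)) (-1) := by
  apply gw_eq_of (uval v r) 1
  · rw [Polynomial.coeff_C_mul, Polynomial.coeff_X_one, mul_one, uval_pi v r hπ,
      Nat.cast_one, val_mul]
    exact val_congr (by ring) (by ring)
  · intro i
    rw [Polynomial.coeff_C_mul, Polynomial.coeff_X]
    rcases eq_or_ne i 1 with rfl | hi1
    · rw [if_pos rfl, mul_one, uval_pi v r hπ, Nat.cast_one, val_mul, val_le_val]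
      exact Or.inr ⟨by ring, by norm_num⟩
    · rw [if_neg (fun h => hi1 h.symm), mul_zero, map_zero, zero_mul]
      exact zero_le'

lemma G3 : gw (uval v r) (X ^ (r + 1) + C π * X : E[X]) = val (-((r : ℤ) + 1)) 0 := by
  apply gw_eq_of (uval v r) (r + 1)
  · rw [Polynomial.coeff_add, Polynomial.coeff_X_pow, Polynomial.coeff_C_mul,
      Polynomial.coeff_X, if_pos rfl, if_neg (by omega), mul_zero, add_zero, map_one, one_mul]
    have hc : (-((r + 1 : ℕ) : ℤ)) = -((r : ℤ) + 1) := by push_cast; ring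
    rw [hc]
  · intro i
    rw [Polynomial.coeff_add, Polynomial.coeff_X_pow, Polynomial.coeff_C_mul, Polynomial.coeff_X]
    rcases eq_or_ne i (r + 1) with rfl | hir
    · rw [if_pos rfl, if_neg (by omega), mul_zero, add_zero, map_one, one_mul, val_le_val]
      exact Or.inr ⟨by push_cast; ring, le_rfl⟩
    · rw [if_neg hir]
      rcases eq_or_ne i 1 with rfl | hi1
      · rw [if_pos rfl, mul_one, zero_add, uval_pi v r hπ, Nat.cast_one, val_mul, val_le_val]
        exact Or.inr ⟨by push_cast; ring, by norm_num⟩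
      · rw [if_neg (fun h => hi1 h.symm), mul_zero, add_zero, map_zero, zero_mul]
        exact zero_le'

theorem main_poly (p : Fin 4 → E[X])
    (hsum : (X ^ r - C π) * p 0 ^ 2 + (X ^ (r + 1) + C π) * p 1 ^ 2 +
      (C π * X) * p 2 ^ 2 + (X ^ (r + 1) + C π * X) * p 3 ^ 2 = 0) :
    ∀ i, p i = 0 := by
  classical
  set U := uval v r with hU
  set c : Fin 4 → E[X] :=
    ![X ^ r - C π, X ^ (r + 1) + C π, C π * X, X ^ (r + 1) + C π * X] with hc
  set A : Fin 4 → ℤ := ![-(r : ℤ), -(r : ℤ), -((r : ℤ) + 1), -((r : ℤ) + 1)] with hA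
  set B : Fin 4 → ℤ := ![0, -1, -1, 0] with hB
  have hgc : ∀ i, gw U (c i) = val (A i) (B i) := by
    intro i
    fin_cases i
    · simpa [hc, hA, hB] using G0 v hπ r hr
    · simpa [hc, hA, hB] using G1 v hπ r hr
    · simpa [hc, hA, hB] using G2 v hπ r hr
    · simpa [hc, hA, hB] using G3 v hπ r hr
  have hcne : ∀ i, c i ≠ 0 := fun i h0 =>
    val_ne_zero (A i) (B i) (by rw [← hgc i, h0, gw_zero])
  have hT : ∀ i, gw U (c i * p i ^ 2) = val (A i) (B i) * gw U (p i) ^ 2 := by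
    intro i
    rw [gw_mul, hgc i, pow_two (p i), gw_mul, ← pow_two]
  intro i
  by_contra hpne
  have hTne : gw U (c i * p i ^ 2) ≠ 0 :=
    gw_ne_zero U (mul_ne_zero (hcne i) (pow_ne_zero 2 hpne))
  obtain ⟨i₀, -, hsup⟩ := Finset.exists_mem_eq_sup (Finset.univ : Finset (Fin 4))
    Finset.univ_nonempty (fun j => gw U (c j * p j ^ 2))
  set M := Finset.univ.sup (fun j => gw U (c j * p j ^ 2)) with hM
  have hle' : ∀ j : Fin 4, gw U (c j * p j ^ 2) ≤ M := by
    intro j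
    rw [hM]
    exact Finset.le_sup (f := fun j => gw U (c j * p j ^ 2)) (Finset.mem_univ j)
  have hMne : M ≠ 0 := fun h0 =>
    hTne (le_antisymm (le_trans (hle' i) (le_of_eq h0)) zero_le')
  have hp₀ : p i₀ ≠ 0 := by
    intro h0
    apply hMne
    rw [hsup, h0, zero_pow two_ne_zero, mul_zero, gw_zero]
  have hdom : ∀ j : Fin 4, j ≠ i₀ → gw U (c j * p j ^ 2) < M := by
    intro j hj
    have hle : gw U (c j * p j ^ 2) ≤ M := hle' j
    rcases eq_or_lt_of_le hle with heq | hlt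
    · exfalso
      have hpj : p j ≠ 0 := by
        intro h0
        apply hMne
        rw [← heq, h0, zero_pow two_ne_zero, mul_zero, gw_zero]
      have hcl : val (A j) (B j) * gw U (p j) ^ 2 = val (A i₀) (B i₀) * gw U (p i₀) ^ 2 := by
        rw [← hT j, ← hT i₀, heq, hsup]
      obtain ⟨k, l, k', l', e1, e2⟩ := sq_class_eq (gw_ne_zero U hpj) (gw_ne_zero U hp₀) hcl
      fin_cases j <;> fin_cases i₀ <;>
        first
          | exact absurd rfl hj
          | (simp [hA, hB] at e1 e2; omega)
    · exact hlt
  have hsum4 : ∑ j, c j * p j ^ 2 = 0 := by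
    rw [Fin.sum_univ_four]
    simpa [hc] using hsum
  have hrest : gw U (∑ j ∈ Finset.univ.erase i₀, c j * p j ^ 2) < M := by
    refine lt_of_le_of_lt (gw_sum_le U _ _) ?_
    rw [Finset.sup_lt_iff (show (⊥ : Λ) < M from bot_eq ▸ zero_lt_iff.mpr hMne)]
    intro j hjmem
    exact hdom j (Finset.mem_erase.mp hjmem).1
  have htot : gw U (∑ j, c j * p j ^ 2) = gw U (c i₀ * p i₀ ^ 2) := by
    rw [← Finset.add_sum_erase _ _ (Finset.mem_univ i₀)]
    exact gw_add_eq U (hsup ▸ hrest)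
  rw [hsum4, gw_zero] at htot
  exact hMne (hsup.trans htot.symm)

end Main

end Statement5Aux

open Statement5Aux in
/-- With `E`, `v`, `π` as in the main theorem, for every `r ≥ 1` the form
`φ_r = ⟨X^r - π, X^(r+1) + π, π X, X (X^r + π)⟩` is anisotropic over `E(X) = RatFunc E`. -/
theorem statement5 {E : Type u} [Field E] (hchar : ringChar E ≠ 2)
    (v : Valuation E Zm0) (hZ : Function.Surjective v)
    (hhens : IsHenselianValuation v) (h2 : v 2 = 1)
    (hsep : IsSepClosed (IsLocalRing.ResidueField v.valuationSubring))
    (π : E) (hπ : v π = ((ofAdd (-1 : ℤ) : Multiplicative ℤ) : Zm0))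
    (r : ℕ) (hr : 0 < r) :
    AnisotropicDiag
      ![RatFunc.X ^ r - RatFunc.C π, RatFunc.X ^ (r + 1) + RatFunc.C π,
        RatFunc.C π * RatFunc.X, RatFunc.X * (RatFunc.X ^ r + RatFunc.C π)] := by

  classical
  intro y hy
  set d : Polynomial E := ∏ j, (y j).denom with hdd
  set p : Fin 4 → Polynomial E :=
    fun j => (y j).num * ∏ k ∈ Finset.univ.erase j, (y k).denom with hp
  have hdj : ∀ j : Fin 4, algebraMap (Polynomial E) (RatFunc E) ((y j).denom) ≠ 0 := fun j =>
    RatFunc.algebraMap_ne_zero (RatFunc.denom_ne_zero (y j))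
  have h1 : ∀ j : Fin 4, y j * algebraMap (Polynomial E) (RatFunc E) ((y j).denom) =
      algebraMap (Polynomial E) (RatFunc E) ((y j).num) := by
    intro j
    have hnd := RatFunc.num_div_denom (y j)
    rw [div_eq_iff (hdj j)] at hnd
    exact hnd.symm
  have hyp : ∀ j, algebraMap (Polynomial E) (RatFunc E) (p j) =
      y j * algebraMap (Polynomial E) (RatFunc E) d := by
    intro j
    have h2 : (y j).denom * ∏ k ∈ Finset.univ.erase j, (y k).denom = d := by
      rw [hdd]
      exact Finset.mul_prod_erase Finset.univ (fun k => (y k).denom) (Finset.mem_univ j)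
    show algebraMap (Polynomial E) (RatFunc E)
        ((y j).num * ∏ k ∈ Finset.univ.erase j, (y k).denom) = _
    rw [map_mul, ← h2, map_mul, ← mul_assoc, h1 j]
  have hy4 := hy
  rw [Fin.sum_univ_four] at hy4
  simp only [Matrix.cons_val_zero, Matrix.cons_val_one, Matrix.head_cons,
    Matrix.cons_val_two, Matrix.tail_cons, Matrix.cons_val_three] at hy4
  have hpoly : (Polynomial.X ^ r - Polynomial.C π) * p 0 ^ 2 +
      (Polynomial.X ^ (r + 1) + Polynomial.C π) * p 1 ^ 2 +
      (Polynomial.C π * Polynomial.X) * p 2 ^ 2 +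
      (Polynomial.X ^ (r + 1) + Polynomial.C π * Polynomial.X) * p 3 ^ 2 = 0 := by
    apply RatFunc.algebraMap_injective
    simp only [map_add, map_sub, map_mul, map_pow, map_zero, RatFunc.algebraMap_X,
      RatFunc.algebraMap_C, hyp 0, hyp 1, hyp 2, hyp 3]
    linear_combination (algebraMap (Polynomial E) (RatFunc E) d) ^ 2 * hy4
  have hall := main_poly v hπ r hr p hpoly
  funext j
  have hpj := hall j
  have hprodne : (∏ k ∈ Finset.univ.erase j, (y k).denom) ≠ 0 :=
    Finset.prod_ne_zero_iff.mpr fun k _ => RatFunc.denom_ne_zero _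
  have hnum : (y j).num = 0 := by
    rcases mul_eq_zero.mp hpj with h | h
    · exact h
    · exact absurd h hprodne
  show y j = 0
  exact RatFunc.num_eq_zero_iff.mp hnum
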